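/- arXiv:math/0309459 — 2 statements merged into one kernel-verified Lean document; each statement's English description precedes it below -/
import Mathlib

section
/- Suppose a family of operators {∇P_m U(τ')} satisfies ‖∇P_m U(τ')F‖ ≲ 2^m min(1, 2^{-4m}(τ')^{-2}) ‖P_m F‖ for all τ' > 0. Then the integral J_m(τ) = ∫_0^τ (τ - τ')^{-1/2} ‖∇P_m U(τ')F‖ dτ' satisfies J_m(τ) ≲ min(2^m τ^{1/2}, 2^{-m} τ^{-1/2}) ‖P_m F‖. -/
open MeasureTheory Real


private lemma sub_rpow_ii (τ : ℝ) :
    IntervalIntegrable (fun x => (τ - x) ^ (-(1:ℝ)/2)) volume 0 τ := by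
  have h := intervalIntegral.intervalIntegrable_rpow' (a := τ) (b := (0:ℝ)) (r := -(1:ℝ)/2) (by norm_num)
  simpa using h.comp_sub_left τ

private lemma sub_rpow_int (τ : ℝ) (hτ : 0 < τ) :
    ∫ x in (0:ℝ)..τ, (τ - x) ^ (-(1:ℝ)/2) = 2 * τ ^ ((1:ℝ)/2) := by
  rw [intervalIntegral.integral_comp_sub_left (fun x => x ^ (-(1:ℝ)/2)) τ]
  simp only [sub_zero, sub_self]
  rw [integral_rpow (Or.inl (by norm_num))]
  rw [Real.zero_rpow (by norm_num)]
  norm_num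
  ring

private lemma min_integrableOn (c τ₁ τ₂ : ℝ) (hc : 0 ≤ c) :
    IntegrableOn (fun x => min 1 (c * (x^2)⁻¹)) (Set.Ioc τ₁ τ₂) := by
  apply Integrable.mono' (g := fun _ => (1:ℝ))
  · exact integrableOn_const measure_Ioc_lt_top.ne
  · exact ((measurable_const.min (((measurable_id.pow_const 2).inv).const_mul c))).aestronglyMeasurable
  · refine Filter.Eventually.of_forall fun x => ?_
    have h0 : 0 ≤ c * (x^2)⁻¹ := mul_nonneg hc (inv_nonneg.2 (sq_nonneg x))
    rw [Real.norm_eq_abs, abs_le]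
    exact ⟨by linarith [le_min zero_le_one h0], min_le_left _ _⟩

private lemma min_ii (c u v : ℝ) (hc : 0 ≤ c) (huv : u ≤ v) :
    IntervalIntegrable (fun x => min 1 (c * (x^2)⁻¹)) volume u v := by
  rw [intervalIntegrable_iff_integrableOn_Ioc_of_le huv]
  exact min_integrableOn c u v hc

private lemma min_int_le (b τ : ℝ) (hb : 0 < b) (hτ : 0 < τ) :
    ∫ x in Set.Ioo (0:ℝ) τ, min 1 (b^2 * (x^2)⁻¹) ≤ 2 * b := by
  have hb2 : (0:ℝ) ≤ b^2 := sq_nonneg b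
  rw [← MeasureTheory.integral_Ioc_eq_integral_Ioo, ← intervalIntegral.integral_of_le hτ.le]
  rcases le_total τ b with h | h
  · calc ∫ x in (0:ℝ)..τ, min 1 (b^2 * (x^2)⁻¹)
        ≤ ∫ _ in (0:ℝ)..τ, (1:ℝ) := by
          apply intervalIntegral.integral_mono_on hτ.le (min_ii _ _ _ hb2 hτ.le)
            intervalIntegrable_const
          exact fun x _ => min_le_left _ _
      _ = τ := by simp
      _ ≤ 2 * b := by linarith
  · rw [← intervalIntegral.integral_add_adjacent_intervals (min_ii _ _ _ hb2 hb.le)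
      (min_ii _ _ _ hb2 h)]
    have h1 : ∫ x in (0:ℝ)..b, min 1 (b^2 * (x^2)⁻¹) ≤ b := by
      calc ∫ x in (0:ℝ)..b, min 1 (b^2 * (x^2)⁻¹)
          ≤ ∫ _ in (0:ℝ)..b, (1:ℝ) := by
            apply intervalIntegral.integral_mono_on hb.le (min_ii _ _ _ hb2 hb.le)
              intervalIntegrable_const
            exact fun x _ => min_le_left _ _
        _ = b := by simp
    have h0mem : (0:ℝ) ∉ Set.uIcc b τ := by
      rw [Set.uIcc_of_le h]
      intro hmem
      exact absurd hmem.1 (not_le.2 hb)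
    have hii : IntervalIntegrable (fun x => b^2 * (x^2)⁻¹) volume b τ := by
      apply ContinuousOn.intervalIntegrable
      exact continuousOn_const.mul ((continuousOn_id.pow 2).inv₀ fun x hx =>
        pow_ne_zero 2 (ne_of_mem_of_not_mem hx h0mem))
    have h2 : ∫ x in b..τ, min 1 (b^2 * (x^2)⁻¹) ≤ b := by
      calc ∫ x in b..τ, min 1 (b^2 * (x^2)⁻¹)
          ≤ ∫ x in b..τ, b^2 * (x^2)⁻¹ := by
            apply intervalIntegral.integral_mono_on h (min_ii _ _ _ hb2 h) hii
            exact fun x _ => min_le_right _ _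
        _ = b^2 * ∫ x in b..τ, (x:ℝ) ^ (-2:ℤ) := by
            rw [← intervalIntegral.integral_const_mul]
            apply intervalIntegral.integral_congr
            intro x _
            simp [zpow_neg]
        _ = b^2 * (b⁻¹ - τ⁻¹) := by
            rw [integral_zpow (Or.inr ⟨by norm_num, h0mem⟩)]
            norm_num [zpow_neg]
            exact Or.inl (by ring)
        _ ≤ b := by
            have ht : (0:ℝ) ≤ τ⁻¹ := by positivity
            have hbi : b^2 * b⁻¹ = b := by rw [sq]; field_simp
            nlinarith
    linarith
private lemma half_rpow_le (τ : ℝ) (hτ : 0 < τ) :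
    (τ/2) ^ (-(1:ℝ)/2) ≤ 2 * τ ^ (-(1:ℝ)/2) := by
  rw [Real.div_rpow hτ.le (by norm_num : (0:ℝ) ≤ 2)]
  have h2r : (1:ℝ)/2 ≤ (2:ℝ) ^ (-(1:ℝ)/2) := by
    have h5 := Real.rpow_le_rpow_of_exponent_le (by norm_num : (1:ℝ) ≤ 2)
      (by norm_num : (-1:ℝ) ≤ -(1:ℝ)/2)
    rw [Real.rpow_neg_one] at h5
    linarith
  rw [div_le_iff₀ (by positivity : (0:ℝ) < (2:ℝ)^(-(1:ℝ)/2))]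
  nlinarith [Real.rpow_nonneg hτ.le (-(1:ℝ)/2)]


set_option maxHeartbeats 1000000 in
/-- **Lemma `le:Jmtau`.** If `φ(τ') ≤ 2^m min(1, 2^{-4m} τ'^{-2})` for `τ' > 0`
and `φ ≥ 0`, then `∫_0^τ (τ-τ')^{-1/2} φ(τ') dτ' ≲ min(2^m τ^{1/2}, 2^{-m} τ^{-1/2})`,
uniformly in `m ∈ ℤ`, `τ > 0`. -/
theorem Jm_tau_estimate :
    ∃ C > 0, ∀ (m : ℤ) (φ : ℝ → ℝ) (τ : ℝ), 0 < τ →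
      (∀ τ', 0 ≤ φ τ') →
      (∀ τ', 0 < τ' → φ τ' ≤ (2:ℝ) ^ m * min 1 ((2:ℝ) ^ (-(4*m)) * τ' ^ (-(2:ℝ)))) →
      ∫ τ' in Set.Ioo (0:ℝ) τ, (τ - τ') ^ (-(1:ℝ)/2) * φ τ' ≤
        C * min ((2:ℝ) ^ m * τ ^ ((1:ℝ)/2)) ((2:ℝ) ^ (-m) * τ ^ (-(1:ℝ)/2)) := by
  refine ⟨16, by norm_num, ?_⟩
  intro m φ τ hτ hφ0 hφ
  have hmA : (2:ℝ) ^ (-m) = ((2:ℝ)^m)⁻¹ := zpow_neg 2 m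
  rw [hmA]
  set A : ℝ := (2:ℝ) ^ m with hAdef
  have hA : 0 < A := zpow_pos (by norm_num) m
  set b : ℝ := (A^2)⁻¹ with hbdef
  have hbpos : 0 < b := by positivity
  have hc : (2:ℝ) ^ (-(4*m)) = b^2 := by
    rw [hbdef, hAdef, show -(4*m) = m*(-4) by ring, zpow_mul, ← inv_pow, ← pow_mul]
    rw [zpow_neg]; congr 1; norm_num
  set s : ℝ := τ ^ ((1:ℝ)/2) with hsdef
  set t : ℝ := τ ^ (-(1:ℝ)/2) with htdef
  have hs : 0 < s := Real.rpow_pos_of_pos hτ _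
  have ht : 0 < t := Real.rpow_pos_of_pos hτ _
  have hst : s * s = τ := by
    rw [hsdef, ← Real.rpow_add hτ]; norm_num
  have hst2 : s * t = 1 := by
    rw [hsdef, htdef, ← Real.rpow_add hτ]; norm_num
  have hAi : A * A⁻¹ = 1 := mul_inv_cancel₀ hA.ne'
  have h1 : A⁻¹ * t * (A * s) = 1 := by
    have he : A⁻¹ * t * (A * s) = (A * A⁻¹) * (s * t) := by ring
    rw [he, hAi, hst2, mul_one]
  have h2 : A * s * (A * s) = A^2 * τ := by rw [← hst]; ring
  have hwint : IntegrableOn (fun x => (τ - x) ^ (-(1:ℝ)/2)) (Set.Ioo 0 τ) := by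
    have h := sub_rpow_ii τ
    rw [intervalIntegrable_iff_integrableOn_Ioc_of_le hτ.le] at h
    exact h.mono_set Set.Ioo_subset_Ioc_self
  have hwval : ∫ x in Set.Ioo (0:ℝ) τ, (τ - x) ^ (-(1:ℝ)/2) = 2 * s := by
    rw [← MeasureTheory.integral_Ioc_eq_integral_Ioo, ← intervalIntegral.integral_of_le hτ.le,
      sub_rpow_int τ hτ]
  have hf0 : 0 ≤ᵐ[volume.restrict (Set.Ioo (0:ℝ) τ)]
      fun x => (τ - x) ^ (-(1:ℝ)/2) * φ x := by
    filter_upwards [ae_restrict_mem measurableSet_Ioo] with x hx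
    exact mul_nonneg (Real.rpow_nonneg (by linarith [hx.2]) _) (hφ0 x)
  rcases le_or_gt (A^2 * τ) 1 with hcase | hcase
  · -- small τ : use φ ≤ A
    have hmin : min (A * s) (A⁻¹ * t) = A * s := by
      apply min_eq_left
      nlinarith [h1, h2, mul_pos hA hs]
    calc ∫ x in Set.Ioo (0:ℝ) τ, (τ - x) ^ (-(1:ℝ)/2) * φ x
        ≤ ∫ x in Set.Ioo (0:ℝ) τ, (τ - x) ^ (-(1:ℝ)/2) * A := by
          apply integral_mono_of_nonneg hf0 (hwint.mul_const A)
          filter_upwards [ae_restrict_mem measurableSet_Ioo] with x hx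
          have hb1 : φ x ≤ A := by
            have h3 := hφ x hx.1
            have h4 : min 1 ((2:ℝ)^(-(4*m)) * x ^ (-(2:ℝ))) ≤ 1 := min_le_left _ _
            nlinarith
          exact mul_le_mul_of_nonneg_left hb1 (Real.rpow_nonneg (by linarith [hx.2]) _)
      _ = 2 * s * A := by rw [MeasureTheory.integral_mul_const, hwval]
      _ ≤ 16 * min (A * s) (A⁻¹ * t) := by
          rw [hmin]; nlinarith [mul_pos hA hs]
  · -- large τ
    have hmin : min (A * s) (A⁻¹ * t) = A⁻¹ * t := by
      apply min_eq_right
      nlinarith [h1, h2, mul_pos hA hs]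
    have hbA : b * A^2 = 1 := by rw [hbdef]; field_simp
    have hbτ : b < τ := by nlinarith [pow_pos hA 2]
    have hτ2 : 0 < τ/2 := half_pos hτ
    set C1 : ℝ := (τ/2) ^ (-(1:ℝ)/2) * A with hC1def
    set C2 : ℝ := A⁻¹ * b * (4 / τ^2) with hC2def
    have hu0 : 0 ≤ (τ/2) ^ (-(1:ℝ)/2) := Real.rpow_nonneg hτ2.le _
    have hC1 : 0 ≤ C1 := mul_nonneg hu0 hA.le
    have hC2 : 0 ≤ C2 := by positivity
    have hint1 : IntegrableOn (fun x => C1 * min 1 (b^2 * (x^2)⁻¹)) (Set.Ioo 0 τ) :=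
      ((min_integrableOn (b^2) 0 τ (sq_nonneg b)).mono_set Set.Ioo_subset_Ioc_self).const_mul C1
    have hint2 : IntegrableOn (fun x => (τ - x) ^ (-(1:ℝ)/2) * C2) (Set.Ioo 0 τ) :=
      hwint.mul_const C2
    have hhalf : (τ/2) ^ (-(1:ℝ)/2) ≤ 2 * t := half_rpow_le τ hτ
    calc ∫ x in Set.Ioo (0:ℝ) τ, (τ - x) ^ (-(1:ℝ)/2) * φ x
        ≤ ∫ x in Set.Ioo (0:ℝ) τ,
            (C1 * min 1 (b^2 * (x^2)⁻¹) + (τ - x) ^ (-(1:ℝ)/2) * C2) := by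
          apply integral_mono_of_nonneg hf0 (hint1.add hint2)
          filter_upwards [ae_restrict_mem measurableSet_Ioo] with x hx
          have hxr : x ^ (-(2:ℝ)) = (x^2)⁻¹ := by
            rw [Real.rpow_neg hx.1.le, show (2:ℝ) = ((2:ℕ):ℝ) by norm_num, Real.rpow_natCast]
          have hφx : φ x ≤ A * min 1 (b^2 * (x^2)⁻¹) := by
            have h3 := hφ x hx.1
            rwa [hc, hxr] at h3
          have hmin0 : 0 ≤ min 1 (b^2 * (x^2)⁻¹) :=
            le_min zero_le_one (by positivity)
          have hw0 : 0 ≤ (τ - x) ^ (-(1:ℝ)/2) := Real.rpow_nonneg (by linarith [hx.2]) _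
          rcases le_or_gt x (τ/2) with hx2 | hx2
          · have hwle : (τ - x) ^ (-(1:ℝ)/2) ≤ (τ/2) ^ (-(1:ℝ)/2) :=
              Real.rpow_le_rpow_of_nonpos hτ2 (by linarith [hx.2]) (by norm_num)
            have hfb : (τ - x) ^ (-(1:ℝ)/2) * φ x
                ≤ (τ/2) ^ (-(1:ℝ)/2) * (A * min 1 (b^2 * (x^2)⁻¹)) :=
              mul_le_mul hwle hφx (hφ0 x) hu0
            have h2nn : 0 ≤ (τ - x) ^ (-(1:ℝ)/2) * C2 := mul_nonneg hw0 hC2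
            calc (τ - x) ^ (-(1:ℝ)/2) * φ x
                ≤ (τ/2) ^ (-(1:ℝ)/2) * (A * min 1 (b^2 * (x^2)⁻¹)) := hfb
              _ = C1 * min 1 (b^2 * (x^2)⁻¹) := by rw [hC1def]; ring
              _ ≤ _ := le_add_of_nonneg_right h2nn
          · have hφx2 : φ x ≤ C2 := by
              have h3 : φ x ≤ A * (b^2 * (x^2)⁻¹) :=
                le_trans hφx (mul_le_mul_of_nonneg_left (min_le_right _ _) hA.le)
              have h4 : (x^2)⁻¹ ≤ ((τ/2)^2)⁻¹ := by
                apply inv_anti₀ (by positivity)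
                nlinarith
              have h5 : A * b^2 = A⁻¹ * b := by
                rw [hbdef]; field_simp
              have h6 : ((τ/2)^2)⁻¹ = 4 / τ^2 := by
                field_simp; ring
              calc φ x ≤ A * (b^2 * (x^2)⁻¹) := h3
                _ ≤ A * (b^2 * ((τ/2)^2)⁻¹) :=
                  mul_le_mul_of_nonneg_left (mul_le_mul_of_nonneg_left h4 (sq_nonneg b)) hA.le
                _ = A⁻¹ * b * (4 / τ^2) := by
                  rw [← h6]; linear_combination ((τ/2)^2)⁻¹ * h5
                _ = C2 := by rw [hC2def]
            have h1nn : 0 ≤ C1 * min 1 (b^2 * (x^2)⁻¹) := mul_nonneg hC1 hmin0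
            have hfb : (τ - x) ^ (-(1:ℝ)/2) * φ x ≤ (τ - x) ^ (-(1:ℝ)/2) * C2 :=
              mul_le_mul_of_nonneg_left hφx2 hw0
            simp only [Pi.add_apply]
            linarith
      _ = C1 * (∫ x in Set.Ioo (0:ℝ) τ, min 1 (b^2 * (x^2)⁻¹)) + 2 * s * C2 := by
          rw [MeasureTheory.integral_add hint1 hint2, MeasureTheory.integral_const_mul,
            MeasureTheory.integral_mul_const, hwval]
      _ ≤ C1 * (2 * b) + 2 * s * C2 := by
          have := min_int_le b τ hbpos hτ
          nlinarith [hC1]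
      _ ≤ 16 * min (A * s) (A⁻¹ * t) := by
          rw [hmin, hC1def, hC2def]
          have hab1 : A * b = A⁻¹ := by rw [hbdef, sq]; field_simp
          have e1 : t * τ^2 = s * τ := by
            calc t * τ^2 = (s*t) * (s * τ) := by rw [← hst]; ring
              _ = s * τ := by rw [hst2]; ring
          have hkey : b * s / τ^2 ≤ t := by
            rw [div_le_iff₀ (by positivity : (0:ℝ) < τ^2)]
            nlinarith [hs, hbτ]
          have hterm1 : (τ/2) ^ (-(1:ℝ)/2) * A * (2*b) ≤ 4 * (A⁻¹ * t) := by
            have h7 : (τ/2) ^ (-(1:ℝ)/2) * A * (2*b) ≤ (2*t) * A * (2*b) := by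
              apply mul_le_mul_of_nonneg_right (mul_le_mul_of_nonneg_right hhalf hA.le)
              positivity
            have h8 : (2*t) * A * (2*b) = 4 * (A⁻¹ * t) := by
              rw [← hab1]; ring
            linarith
          have hterm2 : 2 * s * (A⁻¹ * b * (4/τ^2)) ≤ 8 * (A⁻¹ * t) := by
            have h9 : 2 * s * (A⁻¹ * b * (4/τ^2)) = 8 * A⁻¹ * (b * s / τ^2) := by ring
            rw [h9]
            have : 8 * A⁻¹ * (b * s / τ^2) ≤ 8 * A⁻¹ * t := by
              apply mul_le_mul_of_nonneg_left hkey
              positivity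
            linarith
          have hpos : 0 < A⁻¹ * t := by positivity
          linarith
end

section
/- Let Δ be a nonnegative self-adjoint operator on a Hilbert space with spectral measure, U(τ) = e^{-τΔ}, and let m : [0,∞) → ℝ be Schwartz with ∫_0^∞ m(τ)dτ = 0. Define P_k = ∫_0^∞ 2^{2k}m(2^{2k}τ) U(τ) dτ. Then for all integers k, k' and all f: ‖P_k P_{k'} f‖ ≲ 2^{-2|k-k'|} ‖f‖. -/
open MeasureTheory Real RealInnerProductSpace

set_option maxHeartbeats 1000000
set_option synthInstance.maxHeartbeats 1000000
set_option linter.unusedSectionVars false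
set_option linter.unusedVariables false

/-- Heat-flow Littlewood–Paley projection `P_k = ∫_0^∞ 2^{2k} m(2^{2k}τ) e^{-τA} dτ`
associated with a (bounded) nonnegative self-adjoint operator `A` on a Hilbert
space. -/
noncomputable def spectralLP {H : Type*} [NormedAddCommGroup H]
    [InnerProductSpace ℝ H] [CompleteSpace H]
    (A : H →L[ℝ] H) (m : ℝ → ℝ) (k : ℤ) (f : H) : H :=
  ∫ τ in Set.Ioi (0:ℝ),
    ((2:ℝ) ^ (2*k) * m ((2:ℝ) ^ (2*k) * τ)) • (NormedSpace.exp (-(τ • A)) f)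

namespace SpectralLPAux

variable {H : Type*} [NormedAddCommGroup H] [InnerProductSpace ℝ H] [CompleteSpace H]

/-- The heat semigroup `e^{-τA}`. -/
noncomputable def hexp (A : H →L[ℝ] H) (τ : ℝ) : H →L[ℝ] H := NormedSpace.exp (-(τ • A))

lemma hexp_eq (A : H →L[ℝ] H) (τ : ℝ) : hexp A τ = NormedSpace.exp (τ • (-A)) := by
  rw [hexp, smul_neg]

lemma hexp_zero (A : H →L[ℝ] H) : hexp A 0 = 1 := by
  simp [hexp, NormedSpace.exp_zero]

lemma hexp_add (A : H →L[ℝ] H) (τ σ : ℝ) : hexp A (τ + σ) = hexp A τ * hexp A σ := by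
  rw [hexp_eq, hexp_eq, hexp_eq, add_smul]
  let +nondep : NormedAlgebra ℚ (H →L[ℝ] H) := .restrictScalars ℚ ℝ (H →L[ℝ] H)
  exact NormedSpace.exp_add_of_commute (Commute.refl _ |>.smul_left τ |>.smul_right σ)

lemma hexp_comm (A : H →L[ℝ] H) (τ : ℝ) : Commute (hexp A τ) A := by
  rw [hexp_eq]
  exact ((Commute.refl A).neg_left.smul_left τ).exp_left

lemma hexp_sa (A : H →L[ℝ] H) (hA : IsSelfAdjoint A) (τ : ℝ) : IsSelfAdjoint (hexp A τ) := by
  rw [hexp]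
  unfold IsSelfAdjoint
  rw [NormedSpace.star_exp]
  congr 1
  rw [star_neg, star_smul]
  simp [hA.star_eq]

lemma hexp_hasDerivAt (A : H →L[ℝ] H) (f : H) (τ : ℝ) :
    HasDerivAt (fun σ => hexp A σ f) (-(hexp A τ (A f))) τ := by
  have h := hasDerivAt_exp_smul_const (𝕂 := ℝ) (-A) τ
  have h2 := h.clm_apply (hasDerivAt_const τ f)
  simp only [hexp_eq]
  convert h2 using 1
  simp [ContinuousLinearMap.mul_apply]

lemma hexp_cont (A : H →L[ℝ] H) (f : H) : Continuous fun τ => hexp A τ f :=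
  continuous_iff_continuousAt.2 fun τ => (hexp_hasDerivAt A f τ).continuousAt

lemma sa_inner {B : H →L[ℝ] H} (hB : IsSelfAdjoint B) (x y : H) : ⟪B x, y⟫ = ⟪x, B y⟫ := by
  conv_lhs => rw [← ContinuousLinearMap.isSelfAdjoint_iff'.mp hB]
  exact ContinuousLinearMap.adjoint_inner_left B y x

lemma hexp_A_apply (A : H →L[ℝ] H) (τ : ℝ) (f : H) : hexp A τ (A f) = A (hexp A τ f) := by
  calc hexp A τ (A f) = (hexp A τ * A) f := rfl
  _ = (A * hexp A τ) f := by rw [(hexp_comm A τ).eq]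
  _ = A (hexp A τ f) := rfl

section Operator

variable (A : H →L[ℝ] H) (hA : IsSelfAdjoint A) (hApos : ∀ x : H, 0 ≤ ⟪A x, x⟫)

include hA hApos in
lemma hexp_norm_le (f : H) {τ : ℝ} (hτ : 0 ≤ τ) : ‖hexp A τ f‖ ≤ ‖f‖ := by
  set q : ℝ → ℝ := fun σ => ⟪hexp A σ f, hexp A σ f⟫ with hq
  have hderiv : ∀ σ : ℝ, HasDerivAt q (-(2 * ⟪A (hexp A σ f), hexp A σ f⟫)) σ := by
    intro σ
    have h := (hexp_hasDerivAt A f σ).inner ℝ (hexp_hasDerivAt A f σ)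
    refine h.congr_deriv ?_
    rw [inner_neg_right, inner_neg_left, hexp_A_apply,
      real_inner_comm (A ((hexp A σ) f))]
    ring
  have hmono : AntitoneOn q (Set.Icc 0 τ) := by
    apply antitoneOn_of_deriv_nonpos (convex_Icc 0 τ)
    · exact (continuous_iff_continuousAt.2 fun σ => (hderiv σ).continuousAt).continuousOn
    · intro x _
      exact ((hderiv x).differentiableAt).differentiableWithinAt
    · intro x _
      rw [(hderiv x).deriv]
      have := hApos (hexp A x f)
      linarith
  have h0 : q τ ≤ q 0 := by
    rcases eq_or_lt_of_le hτ with h | h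
    · rw [← h]
    · exact hmono (Set.left_mem_Icc.2 hτ) (Set.right_mem_Icc.2 hτ) hτ
  have hq0 : q 0 = ‖f‖ ^ 2 := by simp [hq, hexp_zero, real_inner_self_eq_norm_sq]
  have hqτ : q τ = ‖hexp A τ f‖ ^ 2 := by simp [hq, real_inner_self_eq_norm_sq]
  nlinarith [norm_nonneg (hexp A τ f), norm_nonneg f]

include hA hApos in
lemma hexp_sub_norm (f : H) {τ : ℝ} (hτ : 0 ≤ τ) : ‖hexp A τ f - f‖ ≤ τ * ‖A f‖ := by
  have key := norm_image_sub_le_of_norm_deriv_le_segment'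
    (f := fun σ => hexp A σ f) (f' := fun σ => -(hexp A σ (A f))) (a := 0) (b := τ) (C := ‖A f‖)
    (fun x _ => (hexp_hasDerivAt A f x).hasDerivWithinAt)
    (fun x hx => by
      rw [norm_neg]
      exact hexp_norm_le A hA hApos (A f) hx.1)
    τ (Set.right_mem_Icc.2 hτ)
  calc ‖hexp A τ f - f‖ = ‖hexp A τ f - hexp A 0 f‖ := by rw [hexp_zero]; simp
  _ ≤ ‖A f‖ * (τ - 0) := key
  _ = τ * ‖A f‖ := by ring

include hA hApos in
lemma inner_A_hexp_nonneg (g : H) {τ : ℝ} (hτ : 0 ≤ τ) : 0 ≤ ⟪A (hexp A τ g), g⟫ := by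
  have h2 : hexp A τ = hexp A (τ/2) * hexp A (τ/2) := by rw [← hexp_add]; norm_num
  rw [h2]
  have heq : A ((hexp A (τ/2) * hexp A (τ/2)) g) = hexp A (τ/2) (A (hexp A (τ/2) g)) := by
    rw [ContinuousLinearMap.mul_apply, hexp_A_apply]
  rw [heq, sa_inner (hexp_sa A hA (τ/2))]
  exact hApos _

include hA in
lemma inner_hexp_nonneg (g : H) (τ : ℝ) : 0 ≤ ⟪hexp A τ g, g⟫ := by
  have h2 : hexp A τ = hexp A (τ/2) * hexp A (τ/2) := by rw [← hexp_add]; norm_num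
  rw [h2, ContinuousLinearMap.mul_apply, sa_inner (hexp_sa A hA (τ/2))]
  exact real_inner_self_nonneg

include hA hApos in
lemma integrable_P {a : ℝ → ℝ} (ha : Continuous a)
    (hai : IntegrableOn a (Set.Ioi 0)) (g : H) :
    IntegrableOn (fun τ => a τ • hexp A τ g) (Set.Ioi 0) := by
  apply Integrable.mono' (hai.abs.mul_const ‖g‖)
    ((ha.smul (hexp_cont A g)).aestronglyMeasurable)
  filter_upwards [ae_restrict_mem measurableSet_Ioi] with τ hτ
  rw [Pi.smul_apply', norm_smul, Real.norm_eq_abs]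
  exact mul_le_mul_of_nonneg_left (hexp_norm_le A hA hApos g (le_of_lt hτ)) (abs_nonneg _)

include hA hApos in
lemma integrable_Q {a : ℝ → ℝ} (ha : Continuous a)
    (hai : IntegrableOn a (Set.Ioi 0)) (g : H) :
    IntegrableOn (fun τ => a τ • A (hexp A τ g)) (Set.Ioi 0) := by
  have hc : Continuous fun τ => A (hexp A τ g) := A.continuous.comp (hexp_cont A g)
  apply Integrable.mono' (hai.abs.mul_const ‖A g‖) ((ha.smul hc).aestronglyMeasurable)
  filter_upwards [ae_restrict_mem measurableSet_Ioi] with τ hτ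
  rw [Pi.smul_apply', norm_smul, Real.norm_eq_abs, ← hexp_A_apply]
  exact mul_le_mul_of_nonneg_left (hexp_norm_le A hA hApos (A g) (le_of_lt hτ)) (abs_nonneg _)

include hA hApos in
lemma Q_inner_eq {a : ℝ → ℝ} (ha : Continuous a)
    (hai : IntegrableOn a (Set.Ioi 0)) (x y : H) :
    ⟪∫ τ in Set.Ioi (0:ℝ), a τ • A (hexp A τ x), y⟫
      = ∫ τ in Set.Ioi (0:ℝ), a τ * ⟪A (hexp A τ x), y⟫ := by
  rw [real_inner_comm]
  have h2 := (innerSL ℝ y).integral_comp_comm (integrable_Q A hA hApos ha hai x)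
  simp only [innerSL_apply_apply] at h2
  rw [← h2]
  apply setIntegral_congr_fun measurableSet_Ioi
  intro τ _
  dsimp only
  rw [real_inner_smul_right, real_inner_comm]

include hA hApos in
lemma Q_inner_integrable {a : ℝ → ℝ} (ha : Continuous a)
    (hai : IntegrableOn a (Set.Ioi 0)) (x y : H) :
    IntegrableOn (fun τ => a τ * ⟪A (hexp A τ x), y⟫) (Set.Ioi 0) := by
  have h3 := (innerSL ℝ y).integrable_comp (integrable_Q A hA hApos ha hai x)
  apply Integrable.congr h3
  filter_upwards with τ
  simp only [innerSL_apply_apply]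
  rw [real_inner_smul_right, real_inner_comm]

include hA hApos in
lemma Q_form_bound {a : ℝ → ℝ} (ha : Continuous a)
    (hai : IntegrableOn a (Set.Ioi 0)) {S : ℝ}
    (ha0 : ∀ τ, 0 ≤ τ → 0 ≤ a τ) (haS : ∀ τ, 0 ≤ τ → a τ ≤ S) (g : H) :
    ⟪∫ τ in Set.Ioi (0:ℝ), a τ • A (hexp A τ g), g⟫ ≤ S * ‖g‖ ^ 2 := by
  set φ : ℝ → ℝ := fun τ => ⟪A (hexp A τ g), g⟫ with hφ
  have hφcont : Continuous φ :=
    continuous_inner.comp ((A.continuous.comp (hexp_cont A g)).prodMk continuous_const)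
  set h : ℝ → ℝ := fun τ => ⟪hexp A τ g, g⟫ with hh
  have hhderiv : ∀ τ : ℝ, HasDerivAt h (-(φ τ)) τ := by
    intro τ
    have := (hexp_hasDerivAt A g τ).inner ℝ (hasDerivAt_const τ g)
    simpa [hh, hφ, inner_neg_left, hexp_A_apply] using this
  rw [Q_inner_eq A hA hApos ha hai]
  have haφ : IntegrableOn (fun τ => a τ * φ τ) (Set.Ioi 0) :=
    Q_inner_integrable A hA hApos ha hai g g
  have hIoc : ∀ R : ℝ, 0 ≤ R → ∫ τ in (0:ℝ)..R, a τ * φ τ ≤ S * ‖g‖ ^ 2 := by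
    intro R hR
    have hFTC : ∫ τ in (0:ℝ)..R, -(φ τ) = h R - h 0 := by
      apply intervalIntegral.integral_eq_sub_of_hasDerivAt
      · intro x _; exact hhderiv x
      · exact (hφcont.neg).intervalIntegrable 0 R
    have hφint : ∫ τ in (0:ℝ)..R, φ τ = h 0 - h R := by
      have hneg : ∫ τ in (0:ℝ)..R, -(φ τ) = -∫ τ in (0:ℝ)..R, φ τ :=
        intervalIntegral.integral_neg
      rw [hneg] at hFTC
      linarith
    have hiaφ : IntervalIntegrable (fun τ => a τ * φ τ) volume 0 R := by
      rw [intervalIntegrable_iff]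
      exact haφ.mono_set ((Set.uIoc_of_le hR) ▸ Set.Ioc_subset_Ioi_self)
    have hiSφ : IntervalIntegrable (fun τ => S * φ τ) volume 0 R :=
      (continuous_const.mul hφcont).intervalIntegrable 0 R
    have hmono : ∫ τ in (0:ℝ)..R, a τ * φ τ ≤ ∫ τ in (0:ℝ)..R, S * φ τ := by
      apply intervalIntegral.integral_mono_on hR hiaφ hiSφ
      intro x hx
      exact mul_le_mul_of_nonneg_right (haS x hx.1)
        (inner_A_hexp_nonneg A hA hApos g hx.1)
    have hS0 : 0 ≤ S := le_trans (ha0 0 le_rfl) (haS 0 le_rfl)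
    have hh0 : h 0 = ‖g‖ ^ 2 := by
      simp [hh, hexp_zero, real_inner_self_eq_norm_sq]
    have hhR : 0 ≤ h R := inner_hexp_nonneg A hA g R
    calc ∫ τ in (0:ℝ)..R, a τ * φ τ ≤ ∫ τ in (0:ℝ)..R, S * φ τ := hmono
    _ = S * (h 0 - h R) := by rw [intervalIntegral.integral_const_mul, hφint]
    _ ≤ S * ‖g‖ ^ 2 := by nlinarith
  have htend := intervalIntegral_tendsto_integral_Ioi 0 haφ Filter.tendsto_id
  apply le_of_tendsto htend
  filter_upwards [Filter.eventually_ge_atTop (0:ℝ)] with R hR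
  exact hIoc R hR

include hA hApos in
lemma Q_form_nonneg {a : ℝ → ℝ} (ha : Continuous a)
    (hai : IntegrableOn a (Set.Ioi 0)) (ha0 : ∀ τ, 0 ≤ τ → 0 ≤ a τ) (g : H) :
    0 ≤ ⟪∫ τ in Set.Ioi (0:ℝ), a τ • A (hexp A τ g), g⟫ := by
  rw [Q_inner_eq A hA hApos ha hai]
  apply setIntegral_nonneg measurableSet_Ioi
  intro τ hτ
  exact mul_nonneg (ha0 τ (le_of_lt hτ)) (inner_A_hexp_nonneg A hA hApos g (le_of_lt hτ))

include hA hApos in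
lemma Q_symm {a : ℝ → ℝ} (ha : Continuous a)
    (hai : IntegrableOn a (Set.Ioi 0)) (x y : H) :
    ⟪∫ τ in Set.Ioi (0:ℝ), a τ • A (hexp A τ x), y⟫
      = ⟪x, ∫ τ in Set.Ioi (0:ℝ), a τ • A (hexp A τ y)⟫ := by
  have hx := Q_inner_eq A hA hApos ha hai x y
  have hy := Q_inner_eq A hA hApos ha hai y x
  rw [hx, show (⟪x, ∫ τ in Set.Ioi (0:ℝ), a τ • A (hexp A τ y)⟫ : ℝ)
      = ⟪∫ τ in Set.Ioi (0:ℝ), a τ • A (hexp A τ y), x⟫ from real_inner_comm _ _, hy]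
  apply setIntegral_congr_fun measurableSet_Ioi
  intro τ _
  dsimp only
  congr 1
  calc ⟪A (hexp A τ x), y⟫ = ⟪hexp A τ x, A y⟫ := sa_inner hA _ _
  _ = ⟪x, hexp A τ (A y)⟫ := sa_inner (hexp_sa A hA τ) _ _
  _ = ⟪x, A (hexp A τ y)⟫ := by rw [hexp_A_apply]
  _ = ⟪A (hexp A τ y), x⟫ := real_inner_comm _ _

end Operator

-- Cauchy–Schwarz style bound for a symmetric positive "operator"
lemma cs_norm_bound (B : H → H)
    (hadd : ∀ x y, B (x + y) = B x + B y)
    (hsmul : ∀ (r : ℝ) (x), B (r • x) = r • B x)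
    (hsymm : ∀ x y, ⟪B x, y⟫ = ⟪x, B y⟫)
    {c : ℝ} (hc : 0 ≤ c)
    (hpos : ∀ x, 0 ≤ ⟪B x, x⟫) (hbd : ∀ x, ⟪B x, x⟫ ≤ c * ‖x‖ ^ 2)
    (x : H) : ‖B x‖ ≤ c * ‖x‖ := by
  set y := B x with hy
  have hquad : ∀ r : ℝ, 0 ≤ ⟪B y, y⟫ * (r * r) + (2 * ⟪B x, y⟫) * r + ⟪B x, x⟫ := by
    intro r
    have hexpand : ⟪B (x + r • y), x + r • y⟫
        = ⟪B y, y⟫ * (r * r) + (2 * ⟪B x, y⟫) * r + ⟪B x, x⟫ := by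
      rw [hadd, hsmul]
      rw [inner_add_left, inner_add_right, inner_add_right]
      rw [real_inner_smul_left, real_inner_smul_right, real_inner_smul_left,
        real_inner_smul_right]
      have : ⟪B y, x⟫ = ⟪B x, y⟫ := by
        rw [hsymm, real_inner_comm]
      rw [this]
      ring
    rw [← hexpand]
    exact hpos _
  have hdisc := discrim_le_zero hquad
  rw [discrim] at hdisc
  have key : ⟪B x, y⟫ ^ 2 ≤ ⟪B x, x⟫ * ⟪B y, y⟫ := by nlinarith
  have h1 : ‖y‖ ^ 2 = ⟪B x, y⟫ := by
    rw [hy, real_inner_self_eq_norm_sq]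
  have h2 := hbd x
  have h3 := hbd y
  have h4 : ‖y‖ ^ 4 ≤ (c * ‖x‖ ^ 2) * (c * ‖y‖ ^ 2) := by
    nlinarith [hpos x, hpos y]
  rcases eq_or_lt_of_le (norm_nonneg y) with h0 | h0
  · rw [← h0]
    positivity
  · have h5 : ‖y‖ ^ 2 ≤ (c * ‖x‖) ^ 2 := by nlinarith [mul_pos h0 h0]
    nlinarith [norm_nonneg x, mul_nonneg hc (norm_nonneg x)]

section Operator2

variable (A : H →L[ℝ] H) (hA : IsSelfAdjoint A) (hApos : ∀ x : H, 0 ≤ ⟪A x, x⟫)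

include hA hApos in
lemma Q_norm_le {a : ℝ → ℝ} (ha : Continuous a)
    (hai : IntegrableOn a (Set.Ioi 0)) {S : ℝ}
    (ha0 : ∀ τ, 0 ≤ τ → 0 ≤ a τ) (haS : ∀ τ, 0 ≤ τ → a τ ≤ S) (g : H) :
    ‖∫ τ in Set.Ioi (0:ℝ), a τ • A (hexp A τ g)‖ ≤ S * ‖g‖ := by
  have hS0 : 0 ≤ S := le_trans (ha0 0 le_rfl) (haS 0 le_rfl)
  apply cs_norm_bound (fun g => ∫ τ in Set.Ioi (0:ℝ), a τ • A (hexp A τ g))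
  · intro x y
    rw [← integral_add (integrable_Q A hA hApos ha hai x) (integrable_Q A hA hApos ha hai y)]
    apply setIntegral_congr_fun measurableSet_Ioi
    intro τ _
    dsimp only
    rw [(hexp A τ).map_add, A.map_add, smul_add]
  · intro r x
    rw [← integral_smul]
    apply setIntegral_congr_fun measurableSet_Ioi
    intro τ _
    dsimp only
    rw [(hexp A τ).map_smul, A.map_smul, smul_comm]
  · exact Q_symm A hA hApos ha hai
  · exact hS0
  · exact Q_form_nonneg A hA hApos ha hai ha0
  · exact Q_form_bound A hA hApos ha hai ha0 haS

end Operator2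

lemma weight_integrable {g : ℝ → ℝ} (hg : Continuous g) {C : ℝ}
    (hC : ∀ τ : ℝ, 0 ≤ τ → |g τ| * (1 + τ ^ 2) ≤ C) :
    IntegrableOn g (Set.Ioi (0:ℝ)) := by
  have hint : IntegrableOn (fun τ : ℝ => C * (1 + τ ^ 2)⁻¹) (Set.Ioi (0:ℝ)) :=
    (integrable_inv_one_add_sq.restrict).const_mul C
  apply Integrable.mono' hint hg.aestronglyMeasurable.restrict
  filter_upwards [ae_restrict_mem measurableSet_Ioi] with τ hτ
  have h1 : (0:ℝ) < 1 + τ ^ 2 := by positivity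
  rw [Real.norm_eq_abs]
  have h2 := hC τ (le_of_lt hτ)
  have h3 := mul_le_mul_of_nonneg_right h2 (inv_nonneg.2 h1.le)
  rwa [mul_assoc, mul_inv_cancel₀ h1.ne', mul_one] at h3

lemma pos_part_sub_neg_part (x : ℝ) : max x 0 - max (-x) 0 = x := by
  rcases le_total x 0 with h | h
  · rw [max_eq_right h, max_eq_left (neg_nonneg.2 h)]; ring
  · rw [max_eq_left h, max_eq_right (neg_nonpos.2 h)]; ring

section Main

variable (A : H →L[ℝ] H) (hA : IsSelfAdjoint A) (hApos : ∀ x : H, 0 ≤ ⟪A x, x⟫)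
variable {m : ℝ → ℝ} (hm_cont : Continuous m) (hmi : IntegrableOn m (Set.Ioi 0))

include hA hApos hm_cont hmi in
lemma A_bound {c : ℝ} (hc : 0 < c) {Mb : ℝ} (hMb : ∀ τ : ℝ, 0 ≤ τ → |m τ| ≤ Mb) (f : H) :
    ‖A (∫ τ in Set.Ioi (0:ℝ), (c * m (c * τ)) • hexp A τ f)‖ ≤ 2 * Mb * c * ‖f‖ := by
  set mp : ℝ → ℝ := fun σ => max (m σ) 0 with hmp
  set mm : ℝ → ℝ := fun σ => max (-(m σ)) 0 with hmm
  have hmp_cont : Continuous mp := hm_cont.max continuous_const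
  have hmm_cont : Continuous mm := hm_cont.neg.max continuous_const
  have hmp_int : IntegrableOn mp (Set.Ioi 0) := by
    apply Integrable.mono' hmi.abs hmp_cont.aestronglyMeasurable.restrict
    filter_upwards with σ
    rw [Real.norm_eq_abs, abs_of_nonneg (le_max_right _ _)]
    exact max_le (le_abs_self _) (abs_nonneg _)
  have hmm_int : IntegrableOn mm (Set.Ioi 0) := by
    apply Integrable.mono' hmi.abs hmm_cont.aestronglyMeasurable.restrict
    filter_upwards with σ
    rw [Real.norm_eq_abs, abs_of_nonneg (le_max_right _ _)]
    exact max_le (neg_le_abs _) (abs_nonneg _)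
  have hcomp : ∀ g : ℝ → ℝ, IntegrableOn g (Set.Ioi 0) →
      IntegrableOn (fun τ => c * g (c * τ)) (Set.Ioi 0) := by
    intro g hg
    exact Integrable.const_mul
      ((integrableOn_Ioi_comp_mul_left_iff g 0 hc).mpr (by rwa [mul_zero])) c
  have ha_cont : Continuous (fun τ => c * m (c * τ)) :=
    continuous_const.mul (hm_cont.comp (continuous_const.mul continuous_id))
  have hap_cont : Continuous (fun τ => c * mp (c * τ)) :=
    continuous_const.mul (hmp_cont.comp (continuous_const.mul continuous_id))
  have ham_cont : Continuous (fun τ => c * mm (c * τ)) :=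
    continuous_const.mul (hmm_cont.comp (continuous_const.mul continuous_id))
  have hMb0 : 0 ≤ Mb := le_trans (abs_nonneg _) (hMb 0 le_rfl)
  have hPull : A (∫ τ in Set.Ioi (0:ℝ), (c * m (c * τ)) • hexp A τ f)
      = ∫ τ in Set.Ioi (0:ℝ), (c * m (c * τ)) • A (hexp A τ f) := by
    rw [← A.integral_comp_comm (integrable_P A hA hApos ha_cont (hcomp m hmi) f)]
    apply setIntegral_congr_fun measurableSet_Ioi
    intro τ _
    exact A.map_smul _ _
  have hsplit : (∫ τ in Set.Ioi (0:ℝ), (c * m (c * τ)) • A (hexp A τ f))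
      = (∫ τ in Set.Ioi (0:ℝ), (c * mp (c * τ)) • A (hexp A τ f))
        - ∫ τ in Set.Ioi (0:ℝ), (c * mm (c * τ)) • A (hexp A τ f) := by
    rw [← integral_sub (integrable_Q A hA hApos hap_cont (hcomp mp hmp_int) f)
      (integrable_Q A hA hApos ham_cont (hcomp mm hmm_int) f)]
    apply setIntegral_congr_fun measurableSet_Ioi
    intro τ _
    dsimp only
    rw [← sub_smul, ← mul_sub, pos_part_sub_neg_part]
  have hbp : ‖∫ τ in Set.Ioi (0:ℝ), (c * mp (c * τ)) • A (hexp A τ f)‖ ≤ (c * Mb) * ‖f‖ := by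
    apply Q_norm_le A hA hApos hap_cont (hcomp mp hmp_int)
    · intro τ hτ
      exact mul_nonneg hc.le (le_max_right _ _)
    · intro τ hτ
      apply mul_le_mul_of_nonneg_left _ hc.le
      exact max_le (le_trans (le_abs_self _) (hMb _ (mul_nonneg hc.le hτ))) hMb0
  have hbm : ‖∫ τ in Set.Ioi (0:ℝ), (c * mm (c * τ)) • A (hexp A τ f)‖ ≤ (c * Mb) * ‖f‖ := by
    apply Q_norm_le A hA hApos ham_cont (hcomp mm hmm_int)
    · intro τ hτ
      exact mul_nonneg hc.le (le_max_right _ _)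
    · intro τ hτ
      apply mul_le_mul_of_nonneg_left _ hc.le
      exact max_le (le_trans (neg_le_abs _) (hMb _ (mul_nonneg hc.le hτ))) hMb0
  rw [hPull, hsplit]
  calc ‖(∫ τ in Set.Ioi (0:ℝ), (c * mp (c * τ)) • A (hexp A τ f))
        - ∫ τ in Set.Ioi (0:ℝ), (c * mm (c * τ)) • A (hexp A τ f)‖
      ≤ ‖∫ τ in Set.Ioi (0:ℝ), (c * mp (c * τ)) • A (hexp A τ f)‖
        + ‖∫ τ in Set.Ioi (0:ℝ), (c * mm (c * τ)) • A (hexp A τ f)‖ := norm_sub_le _ _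
  _ ≤ (c * Mb) * ‖f‖ + (c * Mb) * ‖f‖ := add_le_add hbp hbm
  _ = 2 * Mb * c * ‖f‖ := by ring

include hA hApos hm_cont hmi in
lemma smooth_bound {c : ℝ} (hc : 0 < c)
    (hm_mean : ∫ τ in Set.Ioi (0:ℝ), m τ = 0)
    (hψ : IntegrableOn (fun σ => |m σ| * σ) (Set.Ioi 0)) (g : H) :
    ‖∫ τ in Set.Ioi (0:ℝ), (c * m (c * τ)) • hexp A τ g‖
      ≤ c⁻¹ * (∫ σ in Set.Ioi (0:ℝ), |m σ| * σ) * ‖A g‖ := by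
  have ha_cont : Continuous (fun τ => c * m (c * τ)) :=
    continuous_const.mul (hm_cont.comp (continuous_const.mul continuous_id))
  have ha_int : IntegrableOn (fun τ => c * m (c * τ)) (Set.Ioi 0) := by
    exact Integrable.const_mul
      ((integrableOn_Ioi_comp_mul_left_iff m 0 hc).mpr (by rwa [mul_zero])) c
  have hmean' : (∫ τ in Set.Ioi (0:ℝ), c * m (c * τ)) = 0 := by
    rw [integral_const_mul]
    have := integral_comp_mul_left_Ioi m 0 hc
    rw [mul_zero] at this
    rw [this, smul_eq_mul, hm_mean]
    ring
  have hzero : (∫ τ in Set.Ioi (0:ℝ), (c * m (c * τ)) • g) = 0 := by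
    rw [integral_smul_const, hmean', zero_smul]
  have hrw : (∫ τ in Set.Ioi (0:ℝ), (c * m (c * τ)) • hexp A τ g)
      = ∫ τ in Set.Ioi (0:ℝ), (c * m (c * τ)) • (hexp A τ g - g) := by
    rw [eq_comm]
    have hsub : (∫ τ in Set.Ioi (0:ℝ), (c * m (c * τ)) • (hexp A τ g - g))
        = (∫ τ in Set.Ioi (0:ℝ), (c * m (c * τ)) • hexp A τ g)
          - ∫ τ in Set.Ioi (0:ℝ), (c * m (c * τ)) • g := by
      rw [← integral_sub (integrable_P A hA hApos ha_cont ha_int g)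
        (ha_int.smul_const g)]
      apply setIntegral_congr_fun measurableSet_Ioi
      intro τ _
      dsimp only
      rw [smul_sub]
    rw [hsub, hzero, sub_zero]
  rw [hrw]
  have hψc : IntegrableOn (fun τ => (|m (c * τ)| * (c * τ)) * ‖A g‖) (Set.Ioi 0) := by
    exact Integrable.mul_const
      ((integrableOn_Ioi_comp_mul_left_iff (fun σ => |m σ| * σ) 0 hc).mpr
        (by rwa [mul_zero])) ‖A g‖
  have hbd : ‖∫ τ in Set.Ioi (0:ℝ), (c * m (c * τ)) • (hexp A τ g - g)‖
      ≤ ∫ τ in Set.Ioi (0:ℝ), (|m (c * τ)| * (c * τ)) * ‖A g‖ := by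
    apply norm_integral_le_of_norm_le hψc
    filter_upwards [ae_restrict_mem measurableSet_Ioi] with τ hτ
    rw [norm_smul, Real.norm_eq_abs, abs_mul, abs_of_pos hc]
    calc c * |m (c * τ)| * ‖hexp A τ g - g‖
        ≤ c * |m (c * τ)| * (τ * ‖A g‖) := by
          apply mul_le_mul_of_nonneg_left
            (hexp_sub_norm A hA hApos g (le_of_lt hτ))
            (mul_nonneg hc.le (abs_nonneg _))
    _ = (|m (c * τ)| * (c * τ)) * ‖A g‖ := by ring
  have hval : (∫ τ in Set.Ioi (0:ℝ), (|m (c * τ)| * (c * τ)) * ‖A g‖)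
      = c⁻¹ * (∫ σ in Set.Ioi (0:ℝ), |m σ| * σ) * ‖A g‖ := by
    rw [integral_mul_const]
    have := integral_comp_mul_left_Ioi (fun σ => |m σ| * σ) 0 hc
    rw [mul_zero] at this
    rw [this, smul_eq_mul]
  rw [hval] at hbd
  exact hbd

include hA hApos in
lemma hexp_apply_P {b : ℝ → ℝ} (hb : Continuous b)
    (hbi : IntegrableOn b (Set.Ioi 0)) (σ : ℝ) (f : H) :
    hexp A σ (∫ τ in Set.Ioi (0:ℝ), b τ • hexp A τ f)
      = ∫ τ in Set.Ioi (0:ℝ), b τ • hexp A (σ + τ) f := by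
  rw [← (hexp A σ).integral_comp_comm (integrable_P A hA hApos hb hbi f)]
  apply setIntegral_congr_fun measurableSet_Ioi
  intro τ _
  dsimp only
  rw [(hexp A σ).map_smul, hexp_add]
  rfl

include hA hApos hm_cont hmi in
lemma P_comm {a b : ℝ → ℝ} (ha : Continuous a) (hai : IntegrableOn a (Set.Ioi 0))
    (hb : Continuous b) (hbi : IntegrableOn b (Set.Ioi 0)) (f : H) :
    (∫ σ in Set.Ioi (0:ℝ), a σ • hexp A σ (∫ τ in Set.Ioi (0:ℝ), b τ • hexp A τ f))
      = ∫ τ in Set.Ioi (0:ℝ), b τ • hexp A τ (∫ σ in Set.Ioi (0:ℝ), a σ • hexp A σ f) := by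
  have hFint : Integrable (Function.uncurry fun σ τ => (a σ * b τ) • hexp A (σ + τ) f)
      ((volume.restrict (Set.Ioi (0:ℝ))).prod (volume.restrict (Set.Ioi (0:ℝ)))) := by
    have hcont : Continuous fun p : ℝ × ℝ => (a p.1 * b p.2) • hexp A (p.1 + p.2) f :=
      ((ha.comp continuous_fst).mul (hb.comp continuous_snd)).smul
        ((hexp_cont A f).comp (continuous_fst.add continuous_snd))
    apply Integrable.mono' (((hai.abs.mul_prod hbi.abs)).mul_const ‖f‖)
      hcont.aestronglyMeasurable
    rw [Measure.prod_restrict]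
    filter_upwards [ae_restrict_mem (measurableSet_Ioi.prod measurableSet_Ioi)] with p hp
    obtain ⟨h1, h2⟩ := hp
    rcases p with ⟨x, y⟩
    simp only [Function.uncurry_apply_pair]
    rw [norm_smul, Real.norm_eq_abs, abs_mul]
    have hx : (0:ℝ) < x := h1
    have hy : (0:ℝ) < y := h2
    apply mul_le_mul_of_nonneg_left
      (hexp_norm_le A hA hApos f (by positivity : (0:ℝ) ≤ x + y))
      (mul_nonneg (abs_nonneg _) (abs_nonneg _))
  have hswap := integral_integral_swap hFint
  calc (∫ σ in Set.Ioi (0:ℝ), a σ • hexp A σ (∫ τ in Set.Ioi (0:ℝ), b τ • hexp A τ f))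
      = ∫ σ in Set.Ioi (0:ℝ), ∫ τ in Set.Ioi (0:ℝ), (a σ * b τ) • hexp A (σ + τ) f := by
        apply setIntegral_congr_fun measurableSet_Ioi
        intro σ _
        dsimp only
        rw [hexp_apply_P A hA hApos hb hbi σ f, ← integral_smul]
        apply setIntegral_congr_fun measurableSet_Ioi
        intro τ _
        dsimp only
        rw [smul_smul]
  _ = ∫ τ in Set.Ioi (0:ℝ), ∫ σ in Set.Ioi (0:ℝ), (a σ * b τ) • hexp A (σ + τ) f := hswap
  _ = ∫ τ in Set.Ioi (0:ℝ), b τ • hexp A τ (∫ σ in Set.Ioi (0:ℝ), a σ • hexp A σ f) := by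
        apply setIntegral_congr_fun measurableSet_Ioi
        intro τ _
        dsimp only
        rw [hexp_apply_P A hA hApos ha hai τ f, ← integral_smul]
        apply setIntegral_congr_fun measurableSet_Ioi
        intro σ _
        dsimp only
        rw [smul_smul, mul_comm (b τ) (a σ), add_comm τ σ]

end Main

end SpectralLPAux

open SpectralLPAux

/-- **`L²` almost-orthogonality of heat-flow Littlewood–Paley projections.**
For a nonnegative self-adjoint operator `A` on a Hilbert space, with
`U(τ) = e^{-τA}` and `m` Schwartz with vanishing mean `∫_0^∞ m = 0`,
the projections `P_k = ∫_0^∞ 2^{2k} m(2^{2k}τ) U(τ) dτ` satisfy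
`‖P_k P_{k'} f‖ ≲ 2^{-2|k-k'|} ‖f‖`. -/
theorem spectralLP_almost_orthogonality
    {H : Type*} [NormedAddCommGroup H] [InnerProductSpace ℝ H] [CompleteSpace H]
    (A : H →L[ℝ] H) (hA : IsSelfAdjoint A)
    (hApos : ∀ x : H, 0 ≤ ⟪A x, x⟫)
    (m : ℝ → ℝ) (hm_cont : Continuous m)
    (hm_decay : ∀ n : ℕ, ∃ Cn : ℝ, ∀ τ : ℝ, 0 ≤ τ → |m τ| * τ ^ n ≤ Cn)
    (hm_mean : ∫ τ in Set.Ioi (0:ℝ), m τ = 0) :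
    ∃ C > 0, ∀ (k k' : ℤ) (f : H),
      ‖spectralLP A m k (spectralLP A m k' f)‖ ≤
        C * (2:ℝ) ^ (-(2 * |k - k'|)) * ‖f‖ := by
  obtain ⟨C0, hC0⟩ := hm_decay 0
  obtain ⟨C1, hC1⟩ := hm_decay 1
  obtain ⟨C2, hC2⟩ := hm_decay 2
  obtain ⟨C3, hC3⟩ := hm_decay 3
  have hMb : ∀ τ : ℝ, 0 ≤ τ → |m τ| ≤ C0 := fun τ hτ => by
    have := hC0 τ hτ; simpa using this
  have hMb0 : 0 ≤ C0 := le_trans (abs_nonneg _) (hMb 0 le_rfl)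
  have hmi : IntegrableOn m (Set.Ioi 0) := by
    apply weight_integrable hm_cont (C := C0 + C2)
    intro τ hτ
    have h0 := hC0 τ hτ
    have h2 := hC2 τ hτ
    simp only [pow_zero, mul_one] at h0
    nlinarith [abs_nonneg (m τ)]
  have hψ : IntegrableOn (fun σ => |m σ| * σ) (Set.Ioi 0) := by
    apply weight_integrable (hm_cont.abs.mul continuous_id) (C := C1 + C3)
    intro τ hτ
    have h1 := hC1 τ hτ
    have h3 := hC3 τ hτ
    simp only [Pi.mul_apply]
    rw [abs_mul, abs_abs]
    simp only [id_eq]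
    rw [abs_of_nonneg hτ]
    nlinarith [abs_nonneg (m τ)]
  set I1 : ℝ := ∫ σ in Set.Ioi (0:ℝ), |m σ| * σ with hI1def
  have hI1 : 0 ≤ I1 :=
    setIntegral_nonneg measurableSet_Ioi fun σ hσ => mul_nonneg (abs_nonneg _) (le_of_lt hσ)
  have hw_cont : ∀ k : ℤ, Continuous fun τ => ((2:ℝ) ^ (2*k)) * m (((2:ℝ) ^ (2*k)) * τ) :=
    fun k => continuous_const.mul (hm_cont.comp (continuous_const.mul continuous_id))
  have hcpos : ∀ k : ℤ, (0:ℝ) < (2:ℝ) ^ (2*k) := fun k => zpow_pos (by norm_num) _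
  have hw_int : ∀ k : ℤ, IntegrableOn
      (fun τ => ((2:ℝ) ^ (2*k)) * m (((2:ℝ) ^ (2*k)) * τ)) (Set.Ioi 0) := fun k =>
    Integrable.const_mul
      ((integrableOn_Ioi_comp_mul_left_iff m 0 (hcpos k)).mpr (by rwa [mul_zero])) _
  have hP_eq : ∀ (k : ℤ) (f : H), spectralLP A m k f
      = ∫ τ in Set.Ioi (0:ℝ), (((2:ℝ) ^ (2*k)) * m (((2:ℝ) ^ (2*k)) * τ)) • hexp A τ f :=
    fun k f => rfl
  have key : ∀ (k k' : ℤ) (f : H), ‖spectralLP A m k (spectralLP A m k' f)‖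
      ≤ (I1 * (2 * C0)) * ((2:ℝ) ^ (2*k') * ((2:ℝ) ^ (2*k))⁻¹) * ‖f‖ := by
    intro k k' f
    have hs := smooth_bound A hA hApos hm_cont hmi (hcpos k) hm_mean hψ (spectralLP A m k' f)
    rw [← hP_eq] at hs
    have hAb := A_bound A hA hApos hm_cont hmi (hcpos k') hMb f
    rw [← hP_eq] at hAb
    calc ‖spectralLP A m k (spectralLP A m k' f)‖
        ≤ ((2:ℝ) ^ (2*k))⁻¹ * I1 * ‖A (spectralLP A m k' f)‖ := hs
    _ ≤ ((2:ℝ) ^ (2*k))⁻¹ * I1 * (2 * C0 * ((2:ℝ) ^ (2*k')) * ‖f‖) := by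
        apply mul_le_mul_of_nonneg_left hAb
        have := (hcpos k)
        positivity
    _ = (I1 * (2 * C0)) * ((2:ℝ) ^ (2*k') * ((2:ℝ) ^ (2*k))⁻¹) * ‖f‖ := by ring
  have hCnn : 0 ≤ I1 * (2 * C0) := mul_nonneg hI1 (by linarith)
  refine ⟨I1 * (2 * C0) + 1, by linarith, ?_⟩
  intro k k' f
  have hfinal : ∀ X : ℝ, 0 < X →
      (I1 * (2 * C0)) * X * ‖f‖ ≤ (I1 * (2 * C0) + 1) * X * ‖f‖ := by
    intro X hX
    apply mul_le_mul_of_nonneg_right _ (norm_nonneg f)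
    apply mul_le_mul_of_nonneg_right (by linarith) hX.le
  rcases le_total k' k with hkk | hkk
  · have h2 : (2:ℝ) ^ (2*k') * ((2:ℝ) ^ (2*k))⁻¹ = (2:ℝ) ^ (-(2 * |k - k'|)) := by
      rw [abs_of_nonneg (sub_nonneg.2 hkk), ← zpow_neg,
        ← zpow_add₀ (two_ne_zero : (2:ℝ) ≠ 0)]
      congr 1
      ring
    have hk := key k k' f
    rw [h2] at hk
    exact le_trans hk (hfinal _ (zpow_pos (by norm_num) _))
  · have hcomm : spectralLP A m k (spectralLP A m k' f)
        = spectralLP A m k' (spectralLP A m k f) := by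
      rw [hP_eq k, hP_eq k', hP_eq k', hP_eq k]
      exact P_comm A hA hApos hm_cont hmi (hw_cont k) (hw_int k) (hw_cont k') (hw_int k') f
    have h2 : (2:ℝ) ^ (2*k) * ((2:ℝ) ^ (2*k'))⁻¹ = (2:ℝ) ^ (-(2 * |k - k'|)) := by
      rw [abs_of_nonpos (sub_nonpos.2 hkk), ← zpow_neg,
        ← zpow_add₀ (two_ne_zero : (2:ℝ) ≠ 0)]
      congr 1
      ring
    have hk := key k' k f
    rw [h2] at hk
    rw [hcomm]
    exact le_trans hk (hfinal _ (zpow_pos (by norm_num) _))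
end
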